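/- arXiv:1603.07171 — 2 statements merged into one kernel-verified Lean document; each statement's English description precedes it below -/
import Mathlib

section
/- Let F be a number field, O_F its ring of integers, n ≥ 2 and N a positive multiple of n. Let P(T) = a_0 + a_1 T + ⋯ + a_N T^N ∈ O_F[T] have degree N, and let 𝒫 be a nonzero prime ideal of O_F with v_𝒫(a_0) = v_𝒫(a_N) = 0 such that v_𝒫(P(t)) ≤ 0 for all t ∈ F. Let d ∈ O_F \ {0} with v_𝒫(d) > 0 and n ∤ v_𝒫(d). Then there are no y, t ∈ F with y^n = d · P(t), and there are no nonzero y, t ∈ F with y^n = d · a_N · t^N. -/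
/-!
Everything is read off the `𝒫`-adic valuation. Where `v(t) ≥ 0` the value `P(t)` is integral and
`v(P(t)) ≤ 0` forces `v(P(t)) = 0`; where `v(t) < 0` the unit leading coefficient makes
`v(P(t)) = N·v(t)`. Either way `n ∣ v(P(t))`, and likewise `n ∣ v(a_N tᴺ)`, so both right-hand sides
have valuation `≡ v(d) = k ≢ 0 (mod n)` and cannot be `n`-th powers.
-/

open IsDedekindDomain NumberField Polynomial WithZero

namespace Valuation

section

variable {R Γ₀ : Type*} [CommRing R] [LinearOrderedCommGroupWithZero Γ₀] (w : Valuation R Γ₀)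
  {q : R[X]}

lemma map_eval_le_one (hq : ∀ i, w (q.coeff i) ≤ 1) {t : R} (ht : w t ≤ 1) :
    w (q.eval t) ≤ 1 := by
  rw [eval_eq_sum_range]
  refine w.map_sum_le fun i _ => ?_
  rw [map_mul, map_pow]
  exact mul_le_one' (hq i) (pow_le_one' ht i)

lemma map_eval_eq_pow_natDegree (hq : ∀ i, w (q.coeff i) ≤ 1) (hlead : w q.leadingCoeff = 1)
    {t : R} (ht : 1 < w t) : w (q.eval t) = w t ^ q.natDegree := by
  have hleading : w (q.coeff q.natDegree * t ^ q.natDegree) = w t ^ q.natDegree := by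
    rw [map_mul, map_pow, coeff_natDegree, hlead, one_mul]
  rw [eval_eq_sum_range, w.map_sum_eq_of_lt (Finset.self_mem_range_succ _), hleading]
  intro i hi
  have hlt : i < q.natDegree := by
    simp only [Finset.mem_sdiff, Finset.mem_range, Finset.mem_singleton] at hi
    omega
  rw [hleading, map_mul, map_pow]
  calc w (q.coeff i) * w t ^ i ≤ w t ^ i := mul_le_of_le_one_left' (hq i)
    _ < w t ^ q.natDegree := pow_lt_pow_right₀ ht hlt

end

section

variable {R : Type*} [CommRing R] {w : Valuation R ℤᵐ⁰}

lemma pow_ne_of_not_dvd_log {x : R} {n : ℕ} (h : ¬ (n : ℤ) ∣ log (w x)) (y : R) : y ^ n ≠ x := by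
  rintro rfl
  rw [map_pow, log_pow, nsmul_eq_mul] at h
  exact h (dvd_mul_right _ _)

lemma dvd_log_map_eval {q : R[X]} (hq : ∀ i, w (q.coeff i) ≤ 1) (hlead : w q.leadingCoeff = 1)
    {n : ℕ} (hn : n ∣ q.natDegree) {t : R} (ht : 1 ≤ w (q.eval t)) :
    (n : ℤ) ∣ log (w (q.eval t)) := by
  rcases le_or_gt (w t) 1 with hle | hgt
  · rw [le_antisymm (w.map_eval_le_one hq hle) ht, log_one]
    exact dvd_zero _
  · rw [w.map_eval_eq_pow_natDegree hq hlead hgt, log_pow, nsmul_eq_mul]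
    exact (Int.natCast_dvd_natCast.mpr hn).mul_right _

end

end Valuation

lemma IsDedekindDomain.HeightOneSpectrum.intValuation_eq_exp_neg_of_dvd_of_not_dvd
    {R : Type*} [CommRing R] [IsDedekindDomain R] (v : HeightOneSpectrum R) {r : R} {k : ℕ}
    (hdvd : v.asIdeal ^ k ∣ Ideal.span {r}) (hndvd : ¬ v.asIdeal ^ (k + 1) ∣ Ideal.span {r}) :
    v.intValuation r = exp (-(k : ℤ)) :=
  le_antisymm ((v.intValuation_le_pow_iff_dvd r k).mpr hdvd)
    (v.exp_le_intValuation_iff_emultiplicity_le.mpr (emultiplicity_eq_coe.mpr ⟨hdvd, hndvd⟩).le)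

theorem stmt2_general (F : Type*) [Field F] [NumberField F] (n N : ℕ)
    (hnN : n ∣ N) (p : Polynomial (𝓞 F)) (hdeg : p.natDegree = N)
    (v : HeightOneSpectrum (𝓞 F))
    (haN : v.valuation F (algebraMap (𝓞 F) F (p.coeff N)) = 1)
    (hnodiv : ∀ t : F, 1 ≤ v.valuation F ((p.map (algebraMap (𝓞 F) F)).eval t))
    (d : 𝓞 F) (k : ℕ) (hkn : ¬ n ∣ k)
    (hvd : v.asIdeal ^ k ∣ Ideal.span {d} ∧ ¬ v.asIdeal ^ (k + 1) ∣ Ideal.span {d}) :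
    (¬ ∃ y t : F, y ^ n = (algebraMap (𝓞 F) F d) * (p.map (algebraMap (𝓞 F) F)).eval t) ∧
    (¬ ∃ y t : F, y ≠ 0 ∧ t ≠ 0 ∧
      y ^ n = (algebraMap (𝓞 F) F d) * (algebraMap (𝓞 F) F (p.coeff N)) * t ^ N) := by
  set w := v.valuation F
  set q := p.map (algebraMap (𝓞 F) F)
  have hwd : w (algebraMap (𝓞 F) F d) = exp (-(k : ℤ)) := by
    rw [v.valuation_of_algebraMap, v.intValuation_eq_exp_neg_of_dvd_of_not_dvd hvd.1 hvd.2]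
  have hwd0 : w (algebraMap (𝓞 F) F d) ≠ 0 := hwd ▸ exp_ne_zero
  have hqdeg : q.natDegree = N :=
    hdeg ▸ natDegree_map_eq_of_injective (FaithfulSMul.algebraMap_injective (𝓞 F) F) p
  have hqcoeff (i : ℕ) : w (q.coeff i) ≤ 1 := by
    rw [coeff_map]
    exact v.valuation_le_one _
  have hqlead : w q.leadingCoeff = 1 := by
    rw [leadingCoeff, hqdeg, coeff_map, haN]
  have hkn' : ¬ (n : ℤ) ∣ -(k : ℤ) := by
    rw [dvd_neg]
    exact_mod_cast hkn
  constructor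
  · rintro ⟨y, t, hyt⟩
    refine w.pow_ne_of_not_dvd_log ?_ y hyt
    have hqt := hnodiv t
    rw [map_mul, log_mul hwd0 (zero_lt_one.trans_le hqt).ne', hwd, log_exp,
      dvd_add_left (w.dvd_log_map_eval hqcoeff hqlead (hqdeg ▸ hnN) hqt)]
    exact hkn'
  · rintro ⟨y, t, -, ht, hyt⟩
    refine w.pow_ne_of_not_dvd_log ?_ y hyt
    have hwt : w t ^ N ≠ 0 := pow_ne_zero _ (w.ne_zero_iff.mpr ht)
    rw [map_mul, map_mul, haN, mul_one, map_pow, log_mul hwd0 hwt, hwd, log_exp, log_pow,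
      nsmul_eq_mul, dvd_add_left ((Int.natCast_dvd_natCast.mpr hnN).mul_right _)]
    exact hkn'

/-- Key local computation: if `𝒫` is a prime of `O_F` at which `a₀` and `a_N` are units and
which is not a prime divisor of `P`, and `v_𝒫(d) = k > 0` with `n ∤ k`, then the twisted
superelliptic curve `Yⁿ = d·P(T,Z)` has no affine `F`-point (`yⁿ = d·P(t)`) and no
`F`-point at infinity (`yⁿ = d·a_N·tᴺ` with `y, t ≠ 0`). -/
theorem stmt2 (F : Type*) [Field F] [NumberField F] (n N : ℕ) (hn : 2 ≤ n)
    (hN : 0 < N) (hnN : n ∣ N) (p : Polynomial (𝓞 F)) (hdeg : p.natDegree = N)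
    (v : HeightOneSpectrum (𝓞 F))
    (ha0 : v.valuation F (algebraMap (𝓞 F) F (p.coeff 0)) = 1)
    (haN : v.valuation F (algebraMap (𝓞 F) F (p.coeff N)) = 1)
    (hnodiv : ∀ t : F, 1 ≤ v.valuation F ((p.map (algebraMap (𝓞 F) F)).eval t))
    (d : 𝓞 F) (hd : d ≠ 0) (k : ℕ) (hk : 0 < k) (hkn : ¬ n ∣ k)
    (hvd : v.asIdeal ^ k ∣ Ideal.span {d} ∧ ¬ v.asIdeal ^ (k + 1) ∣ Ideal.span {d}) :
    (¬ ∃ y t : F, y ^ n = (algebraMap (𝓞 F) F d) * (p.map (algebraMap (𝓞 F) F)).eval t) ∧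
    (¬ ∃ y t : F, y ≠ 0 ∧ t ≠ 0 ∧
      y ^ n = (algebraMap (𝓞 F) F d) * (algebraMap (𝓞 F) F (p.coeff N)) * t ^ N) :=
  stmt2_general F n N hnN p hdeg v haN hnodiv d k hkn hvd
end

section
/- Let F be a number field and P(T) ∈ O_F[T] a separable polynomial with nonzero discriminant Δ and leading coefficient a_N. Let 𝒫 be a nonzero prime ideal of O_F with v_𝒫(a_N) = 0 and v_𝒫(Δ) = 0, and suppose 𝒫 is a prime divisor of P(T), i.e., v_𝒫(P(t)) > 0 for some t ∈ O_F. Then there exists t' ∈ O_F with v_𝒫(P(t')) = 1. -/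
/-!
Pass to the splitting field `K` of `P` and a prime `𝔔` of `𝓞 K` above `𝒫`. As `a_N` is a
`𝔔`-unit the roots `t_i` of `P` are `𝔔`-integral, and as `Δ` is a `𝔔`-unit they are pairwise
incongruent modulo `𝔔`. Hence a root `t₀ ∈ O_F` of `P` modulo `𝒫` is congruent to exactly one
`t_i`, and in `P'(t₀) = a_N ∑_i ∏_{j ≠ i} (t₀ - t_j)` only the `i`-th summand survives modulo `𝔔`:
`P'(t₀)` is a `𝒫`-unit. If `P(t₀) ∈ 𝒫²`, then `P(t₀ + π) ≡ P'(t₀) π (mod 𝒫²)` for `π ∈ 𝒫 \ 𝒫²`.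
-/

open NumberField Polynomial IsDedekindDomain Finset Lagrange

namespace Ideal

theorem exists_eval_mem_and_notMem_sq {R : Type*} [CommRing R] {P : Ideal R} [P.IsMaximal]
    (hP : P ^ 2 < P) {p : R[X]} {x : R} (hx : p.eval x ∈ P) (hx' : p.derivative.eval x ∉ P) :
    ∃ y, p.eval y ∈ P ∧ p.eval y ∉ P ^ 2 := by
  by_cases hx2 : p.eval x ∈ P ^ 2
  swap
  · exact ⟨x, hx, hx2⟩
  obtain ⟨π, hπ, hπ2⟩ := SetLike.exists_of_lt hP
  obtain ⟨k, hk⟩ := p.binomExpansion x π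
  have hπsq : k * π ^ 2 ∈ P ^ 2 := mul_mem_left _ k (pow_mem_pow hπ 2)
  refine ⟨x + π, ?_, fun hy => ?_⟩
  · rw [hk]
    exact add_mem (add_mem hx (mul_mem_left _ _ hπ)) (hP.le hπsq)
  have hprod : π * p.derivative.eval x ∈ P ^ 2 := by
    have := sub_mem (sub_mem hy hx2) hπsq
    rwa [hk, show p.eval x + p.derivative.eval x * π + k * π ^ 2 - p.eval x - k * π ^ 2 =
      π * p.derivative.eval x by ring] at this
  have hrad : (P ^ 2).radical = P := by
    rw [radical_pow _ two_ne_zero, IsPrime.radical inferInstance]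
  have hprimary : (P ^ 2).IsPrimary :=
    isPrimary_of_isMaximal_radical (by rw [hrad]; infer_instance)
  rcases (isPrimary_iff.mp hprimary).2 hprod with h | h
  · exact hπ2 h
  · exact hx' (hrad ▸ h)

end Ideal

namespace Valuation

variable {K Γ₀ : Type*} [Field K] [LinearOrderedCommGroupWithZero Γ₀] (W : Valuation K Γ₀)
  {ι : Type*} [Fintype ι] {t : ι → K}

theorem pairwise_map_sub_eq_one_of_map_discr_eq_one [LinearOrder ι] (ht : ∀ i, W (t i) ≤ 1)
    (hΔ : W (∏ i, ∏ j, if i < j then (t i - t j) ^ 2 else 1) = 1) :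
    Pairwise fun i j => W (t i - t j) = 1 := by
  have hsub : ∀ i j, W (t i - t j) ≤ 1 := fun i j =>
    (W.map_sub _ _).trans (max_le (ht i) (ht j))
  have hfactor : ∀ i j, W (if i < j then (t i - t j) ^ 2 else 1) ≤ 1 := fun i j => by
    split_ifs
    · rw [map_pow]; exact pow_le_one' (hsub i j) 2
    · rw [map_one]
  have hlt : ∀ i j, i < j → W (t i - t j) = 1 := by
    intro i j hij
    rw [map_prod, prod_eq_one_iff_of_le_one' fun i _ =>
      (map_prod W _ _).trans_le (prod_le_one' fun j _ => hfactor i j)] at hΔ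
    have hrow := hΔ i (mem_univ i)
    rw [map_prod, prod_eq_one_iff_of_le_one' fun j _ => hfactor i j] at hrow
    have hij' := hrow j (mem_univ j)
    rw [if_pos hij, map_pow] at hij'
    exact sq_eq_one.mp hij'
  intro i j hij
  rcases hij.lt_or_gt with h | h
  · exact hlt i j h
  · rw [W.map_sub_swap]; exact hlt j i h

theorem map_eval_derivative_nodal_eq_one [DecidableEq ι] {x : K} (hxt : ∀ i, W (x - t i) ≤ 1)
    (hdist : Pairwise fun i j => W (t i - t j) = 1) (hx : W ((nodal univ t).eval x) < 1) :
    W ((derivative (nodal univ t)).eval x) = 1 := by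
  rw [eval_nodal, map_prod] at hx
  obtain ⟨i₀, -, hi₀⟩ : ∃ i ∈ univ, W (x - t i) < 1 :=
    exists_lt_of_prod_lt' (g := fun _ => (1 : Γ₀)) (by rwa [prod_const_one])
  have hfar : ∀ j ≠ i₀, W (x - t j) = 1 := fun j hj => by
    rw [show x - t j = (x - t i₀) + (t i₀ - t j) by ring,
      W.map_add_eq_of_lt_right (hdist hj.symm ▸ hi₀), hdist hj.symm]
  have hmain : W (∏ j ∈ univ.erase i₀, (x - t j)) = 1 := by
    rw [map_prod]
    exact prod_eq_one fun j hj => hfar j (ne_of_mem_erase hj)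
  have hrest : W (∑ i ∈ univ.erase i₀, ∏ j ∈ univ.erase i, (x - t j)) < 1 := by
    refine W.map_sum_lt one_ne_zero fun i hi => ?_
    rw [map_prod, ← mul_prod_erase _ _ (mem_erase.mpr ⟨(ne_of_mem_erase hi).symm, mem_univ i₀⟩)]
    exact mul_lt_one_of_lt_of_le hi₀ (prod_le_one' fun j _ => hxt j)
  rw [derivative_nodal, eval_finsetSum, ← add_sum_erase _ _ (mem_univ i₀)]
  simp only [eval_nodal]
  rw [W.map_add_eq_of_lt_left (hmain ▸ hrest), hmain]

end Valuation

namespace IsDedekindDomain.HeightOneSpectrum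

section LiesOver

variable {A B L : Type*} [CommRing A] [CommRing B] [IsDedekindDomain B] [Algebra A B] [Field L]
  [Algebra B L] [IsFractionRing B L] [Algebra A L] [IsScalarTower A B L]
  (v : HeightOneSpectrum A) (w : HeightOneSpectrum B) [w.asIdeal.LiesOver v.asIdeal]

theorem valuation_algebraMap_le_one (x : A) : w.valuation L (algebraMap A L x) ≤ 1 := by
  rw [IsScalarTower.algebraMap_apply A B L]
  exact w.valuation_le_one _

theorem valuation_algebraMap_lt_one_iff (x : A) :
    w.valuation L (algebraMap A L x) < 1 ↔ x ∈ v.asIdeal := by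
  rw [IsScalarTower.algebraMap_apply A B L, valuation_lt_one_iff_mem,
    Ideal.mem_of_liesOver w.asIdeal v.asIdeal]

theorem valuation_algebraMap_eq_one_of_notMem {x : A} (hx : x ∉ v.asIdeal) :
    w.valuation L (algebraMap A L x) = 1 :=
  (valuation_algebraMap_le_one w x).antisymm <|
    not_lt.mp (mt (valuation_algebraMap_lt_one_iff v w x).mp hx)

theorem valuation_le_one_of_isRoot {p : A[X]} (hp : p.leadingCoeff ∉ v.asIdeal) {x : L}
    (hx : (p.map (algebraMap A L)).IsRoot x) : w.valuation L x ≤ 1 := by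
  have hint : IsIntegral B (p.leadingCoeff • x) :=
    (isIntegral_leadingCoeff_smul p x (by rwa [aeval_def, ← eval_map])).tower_top
  obtain ⟨y, hy⟩ := IsIntegrallyClosed.isIntegral_iff.mp hint
  have hle : w.valuation L (algebraMap B L y) ≤ 1 := w.valuation_le_one y
  rwa [hy, Algebra.smul_def, map_mul, valuation_algebraMap_eq_one_of_notMem v w hp,
    one_mul] at hle

end LiesOver

variable {F K : Type*} [Field F] [NumberField F] [Field K] [NumberField K] [Algebra F K]
  (v : HeightOneSpectrum (𝓞 F))

theorem eval_derivative_notMem_of_discr_notMem {ι : Type*} [Fintype ι] [LinearOrder ι]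
    {p : (𝓞 F)[X]} (hlc : p.leadingCoeff ∉ v.asIdeal) {t : ι → K}
    (hsplits : (p.map (algebraMap (𝓞 F) K)).Splits)
    (hroots : (p.map (algebraMap (𝓞 F) K)).roots = univ.val.map t) {Δ : 𝓞 F} {n : ℕ}
    (hΔ : algebraMap (𝓞 F) K Δ = algebraMap (𝓞 F) K p.leadingCoeff ^ n *
      ∏ i, ∏ j, if i < j then (t i - t j) ^ 2 else 1)
    (hΔv : Δ ∉ v.asIdeal) {x : 𝓞 F} (hx : p.eval x ∈ v.asIdeal) :
    p.derivative.eval x ∉ v.asIdeal := by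
  obtain ⟨Q, hQ, _⟩ := Ideal.exists_maximal_ideal_liesOver_of_isIntegral (S := 𝓞 K) v.asIdeal
  let w : HeightOneSpectrum (𝓞 K) :=
    ⟨Q, hQ.isPrime, Ideal.ne_bot_of_liesOver_of_ne_bot v.ne_bot Q⟩
  set W := w.valuation K
  set A := algebraMap (𝓞 F) K
  have ha : W (A p.leadingCoeff) = 1 := valuation_algebraMap_eq_one_of_notMem v w hlc
  have ht : ∀ i, W (t i) ≤ 1 := fun i => valuation_le_one_of_isRoot v w hlc <|
    isRoot_of_mem_roots (hroots ▸ Multiset.mem_map_of_mem t (mem_univ_val i))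
  have hdist := W.pairwise_map_sub_eq_one_of_map_discr_eq_one ht <| by
    have hΔ1 : W (A Δ) = 1 := valuation_algebraMap_eq_one_of_notMem v w hΔv
    rwa [hΔ, map_mul, map_pow, ha, one_pow, one_mul] at hΔ1
  have hfactor : p.map A = C (A p.leadingCoeff) * nodal univ t := by
    have hA : Function.Injective A := FaithfulSMul.algebraMap_injective (𝓞 F) K
    rw [hsplits.eq_prod_roots, hroots, leadingCoeff_map_of_injective hA, nodal_eq,
      Multiset.map_map, prod_eq_multiset_prod]
    rfl
  have hxt : ∀ i, W (A x - t i) ≤ 1 := fun i =>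
    (W.map_sub _ _).trans (max_le (valuation_algebraMap_le_one w x) (ht i))
  have hnodal : W ((nodal univ t).eval (A x)) < 1 := by
    have hpx : W (A (p.eval x)) < 1 := (valuation_algebraMap_lt_one_iff v w _).mpr hx
    rwa [← eval₂_at_apply, ← eval_map, hfactor, eval_mul, eval_C, map_mul, ha, one_mul] at hpx
  have hderiv : W (A (p.derivative.eval x)) = 1 := by
    rw [← eval₂_at_apply, ← eval_map, ← derivative_map, hfactor, derivative_C_mul, eval_mul,
      eval_C, map_mul, ha, one_mul]
    exact W.map_eval_derivative_nodal_eq_one hxt hdist hnodal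
  intro hmem
  have hlt : W (A (p.derivative.eval x)) < 1 := (valuation_algebraMap_lt_one_iff v w _).mpr hmem
  exact hlt.ne hderiv

end IsDedekindDomain.HeightOneSpectrum

theorem stmt4_general (F : Type*) [Field F] [NumberField F] (p : Polynomial (𝓞 F)) (N : ℕ)
    (v : IsDedekindDomain.HeightOneSpectrum (𝓞 F))
    (haN : p.leadingCoeff ∉ v.asIdeal)
    (t : Fin N → (p.map (algebraMap (𝓞 F) F)).SplittingField)
    (hroots : ((p.map (algebraMap (𝓞 F) F)).map
        (algebraMap F (p.map (algebraMap (𝓞 F) F)).SplittingField)).roots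
      = Multiset.map t Finset.univ.val)
    (Δ : 𝓞 F)
    (hΔ : algebraMap (𝓞 F) (p.map (algebraMap (𝓞 F) F)).SplittingField Δ =
      (algebraMap (𝓞 F) (p.map (algebraMap (𝓞 F) F)).SplittingField p.leadingCoeff) ^
          (2 * N - 2) *
        ∏ i : Fin N, ∏ j : Fin N, if i < j then (t i - t j) ^ 2 else 1)
    (hΔv : Δ ∉ v.asIdeal)
    (hprimediv : ∃ t₀ : 𝓞 F, p.eval t₀ ∈ v.asIdeal) :
    ∃ t' : 𝓞 F, p.eval t' ∈ v.asIdeal ∧ p.eval t' ∉ v.asIdeal ^ 2 := by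
  let K := (p.map (algebraMap (𝓞 F) F)).SplittingField
  have : NumberField K := NumberField.of_module_finite F K
  have hmap : p.map (algebraMap (𝓞 F) K) = (p.map (algebraMap (𝓞 F) F)).map (algebraMap F K) := by
    rw [Polynomial.map_map, ← IsScalarTower.algebraMap_eq]
  obtain ⟨t₀, ht₀⟩ := hprimediv
  have hderiv : p.derivative.eval t₀ ∉ v.asIdeal :=
    v.eval_derivative_notMem_of_discr_notMem haN (hmap ▸ SplittingField.splits _) (hmap ▸ hroots)
      hΔ hΔv ht₀
  exact Ideal.exists_eval_mem_and_notMem_sq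
    (v.asIdeal.pow_lt_self v.ne_bot v.isPrime.ne_top 2 le_rfl) ht₀ hderiv

/-- If `P ∈ O_F[T]` is separable with discriminant `Δ ≠ 0` (expressed via its roots
`t_1, …, t_N` in the splitting field as `Δ = a_N^{2N-2} ∏_{i<j} (t_i - t_j)²`), and `𝒫` is a
prime at which `a_N` and `Δ` are units and which is a prime divisor of `P`, then `P` takes a
value of exact `𝒫`-adic valuation `1` on `O_F`. -/
theorem stmt4 (F : Type*) [Field F] [NumberField F] (p : Polynomial (𝓞 F)) (N : ℕ)
    (hdeg : p.natDegree = N)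
    (hsep : (p.map (algebraMap (𝓞 F) F)).Separable)
    (v : IsDedekindDomain.HeightOneSpectrum (𝓞 F))
    (haN : p.leadingCoeff ∉ v.asIdeal)
    (t : Fin N → (p.map (algebraMap (𝓞 F) F)).SplittingField)
    (hroots : ((p.map (algebraMap (𝓞 F) F)).map
        (algebraMap F (p.map (algebraMap (𝓞 F) F)).SplittingField)).roots
      = Multiset.map t Finset.univ.val)
    (Δ : 𝓞 F) (hΔ0 : Δ ≠ 0)
    (hΔ : algebraMap (𝓞 F) (p.map (algebraMap (𝓞 F) F)).SplittingField Δ =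
      (algebraMap (𝓞 F) (p.map (algebraMap (𝓞 F) F)).SplittingField p.leadingCoeff) ^
          (2 * N - 2) *
        ∏ i : Fin N, ∏ j : Fin N, if i < j then (t i - t j) ^ 2 else 1)
    (hΔv : Δ ∉ v.asIdeal)
    (hprimediv : ∃ t₀ : 𝓞 F, p.eval t₀ ∈ v.asIdeal) :
    ∃ t' : 𝓞 F, p.eval t' ∈ v.asIdeal ∧ p.eval t' ∉ v.asIdeal ^ 2 :=
  stmt4_general F p N v haN t hroots Δ hΔ hΔv hprimediv
end
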